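/- Let M satisfy the Reset Cliff assumption and let (P̂_h)_{h=1}^H be admissible estimates. If π^{AIL} is any global minimizer of the VAIL objective L(π) = Σ_{h=1}^H Σ_{(s,a)} |P^π_h(s,a) − P̂_h(s,a)|, then for every h ∈ {1,…,H} there exists s ∈ S^G with π^{AIL}_h(a¹|s) > 0. -/

import Mathlib

open Finset

/-- State distribution `d^π_h` of a policy `π` in an episodic tabular MDP
(time steps are 0-indexed: `stateDist ρ P π 0 = ρ`). -/
noncomputable def stateDist {S A : Type*} [Fintype S] [Fintype A] (ρ : S → ℝ)
    (P : ℕ → S → A → S → ℝ) (π : ℕ → S → A → ℝ) : ℕ → S → ℝ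
  | 0 => ρ
  | h + 1 => fun s' => ∑ s : S, ∑ a : A, stateDist ρ P π h s * π h s a * P h s a s'

/-- State-action distribution `P^π_h(s,a) = d^π_h(s) π_h(a|s)`. -/
noncomputable def saDist {S A : Type*} [Fintype S] [Fintype A] (ρ : S → ℝ)
    (P : ℕ → S → A → S → ℝ) (π : ℕ → S → A → ℝ) (h : ℕ) (s : S) (a : A) : ℝ :=
  stateDist ρ P π h s * π h s a

/-- Policy value `V^π = Σ_{h<H} Σ_{(s,a)} P^π_h(s,a) r_h(s,a)`. -/
noncomputable def policyValue {S A : Type*} [Fintype S] [Fintype A] (ρ : S → ℝ)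
    (P : ℕ → S → A → S → ℝ) (π : ℕ → S → A → ℝ) (r : ℕ → S → A → ℝ) (H : ℕ) : ℝ :=
  ∑ h ∈ Finset.range H, ∑ s : S, ∑ a : A, saDist ρ P π h s a * r h s a

/-- `π` is a (Markovian, non-stationary) policy. -/
def IsPolicy {S A : Type*} [Fintype A] (π : ℕ → S → A → ℝ) : Prop :=
  ∀ h s, (∀ a, 0 ≤ π h s a) ∧ (∑ a : A, π h s a) = 1

/-- `P` is a transition function. -/
def IsTransition {S A : Type*} [Fintype S] (P : ℕ → S → A → S → ℝ) : Prop :=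
  ∀ h s a, (∀ s', 0 ≤ P h s a s') ∧ (∑ s' : S, P h s a s') = 1

/-- `ρ` is an initial state distribution. -/
def IsInitDist {S : Type*} [Fintype S] (ρ : S → ℝ) : Prop :=
  (∀ s, 0 ≤ ρ s) ∧ (∑ s : S, ρ s) = 1

/-- Rewards take values in `[0,1]`. -/
def IsReward {S A : Type*} (r : ℕ → S → A → ℝ) : Prop :=
  ∀ h s a, 0 ≤ r h s a ∧ r h s a ≤ 1

/-- The VAIL state-action distribution matching objective
`L(π) = Σ_{h<H} Σ_{(s,a)} |P^π_h(s,a) − Q_h(s,a)|`. -/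
noncomputable def vailLoss {S A : Type*} [Fintype S] [Fintype A] (ρ : S → ℝ)
    (P : ℕ → S → A → S → ℝ) (π : ℕ → S → A → ℝ) (Q : ℕ → S → A → ℝ) (H : ℕ) : ℝ :=
  ∑ h ∈ Finset.range H, ∑ s : S, ∑ a : A, |saDist ρ P π h s a - Q h s a|

/-- The Reset Cliff assumption: good states `G` (with bad states `Gᶜ`), expert action `a1`. -/
def ResetCliff {S A : Type*} [Fintype S] [Fintype A] [DecidableEq S]
    (ρ : S → ℝ) (P : ℕ → S → A → S → ℝ) (r : ℕ → S → A → ℝ)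
    (G : Finset S) (a1 : A) : Prop :=
  G.Nonempty ∧
  (∀ (h : ℕ), ∀ s ∈ G, r h s a1 = 1) ∧
  (∀ (h : ℕ) (s : S) (a : A), (s ∉ G ∨ a ≠ a1) → r h s a = 0) ∧
  (∀ (h : ℕ), ∀ s ∈ G, (∑ s' ∈ G, P h s a1 s') = 1) ∧
  (∀ (h : ℕ), ∀ s ∈ G, ∀ s' ∈ G, 0 < P h s a1 s') ∧
  (∀ (h : ℕ), ∀ s ∈ G, ∀ a : A, a ≠ a1 → (∑ s' ∈ Gᶜ, P h s a s') = 1) ∧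
  (∀ (h : ℕ), ∀ s ∉ G, ∀ a : A, (∑ s' ∈ Gᶜ, P h s a s') = 1) ∧
  (∀ s ∈ G, 0 < ρ s) ∧
  (∀ s ∉ G, ρ s = 0)

/-- Admissible estimates for the expert state-action distributions on a Reset Cliff instance. -/
def AdmissibleEst {S A : Type*} [Fintype S] [DecidableEq S]
    (G : Finset S) (a1 : A) (Q : ℕ → S → A → ℝ) (H : ℕ) : Prop :=
  ∀ h < H, (∀ s a, 0 ≤ Q h s a) ∧
    (∀ (s : S) (a : A), (s ∉ G ∨ a ≠ a1) → Q h s a = 0) ∧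
    (∑ s ∈ G, Q h s a1) = 1

/-!
Suppose `πAIL` puts no weight on `a1` over the good states at some step `h`, and let `n ≤ h`
be the first step at which its state-action distribution has no mass on `G × {a1}`. Good states
can only be entered from good states via `a1`, so from step `n` on this mass stays zero; since
the estimates live on `G × {a1}`, every such step costs the maximal loss `2`. Before `n` the
chain did carry mass on `G × {a1}`, and the positive transitions spread it over all of `G`,
so the state distribution at step `n` is positive on `G`. Following `πAIL` before `n` and the
expert from `n` on keeps the losses of the earlier steps, costs at most `2` at every later step,
and strictly less at step `n`, where its distribution overlaps the estimate: a contradiction.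
-/

section SumAbsSub

variable {ι : Type*} [Fintype ι] {f g : ι → ℝ}

lemma sum_abs_sub_le_sum_add_sum (hf : ∀ i, 0 ≤ f i) (hg : ∀ i, 0 ≤ g i) :
    ∑ i, |f i - g i| ≤ ∑ i, f i + ∑ i, g i := by
  rw [← Finset.sum_add_distrib]
  exact Finset.sum_le_sum fun i _ =>
    abs_sub_le_iff.2 ⟨by linarith [hg i], by linarith [hf i]⟩

lemma sum_abs_sub_eq_sum_add_sum (hf : ∀ i, 0 ≤ f i) (hg : ∀ i, 0 ≤ g i)
    (hfg : ∀ i, f i = 0 ∨ g i = 0) :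
    ∑ i, |f i - g i| = ∑ i, f i + ∑ i, g i := by
  rw [← Finset.sum_add_distrib]
  refine Finset.sum_congr rfl fun i _ => ?_
  rcases hfg i with h | h
  · rw [h, zero_sub, abs_neg, abs_of_nonneg (hg i), zero_add]
  · rw [h, sub_zero, add_zero, abs_of_nonneg (hf i)]

lemma sum_abs_sub_lt_sum_add_sum (hf : ∀ i, 0 ≤ f i) (hg : ∀ i, 0 ≤ g i) (i : ι)
    (hfi : 0 < f i) (hgi : 0 < g i) :
    ∑ i, |f i - g i| < ∑ i, f i + ∑ i, g i := by
  rw [← Finset.sum_add_distrib]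
  refine Finset.sum_lt_sum
    (fun j _ => abs_sub_le_iff.2 ⟨by linarith [hg j], by linarith [hf j]⟩)
    ⟨i, Finset.mem_univ i, abs_sub_lt_iff.2 ⟨by linarith, by linarith⟩⟩

end SumAbsSub

section SwitchPolicy

variable {S A : Type*} {π π' : ℕ → S → A → ℝ}

def switchPolicy (π π' : ℕ → S → A → ℝ) (n : ℕ) : ℕ → S → A → ℝ :=
  fun h => if h < n then π h else π' h

lemma switchPolicy_of_lt {n h : ℕ} (hh : h < n) : switchPolicy π π' n h = π h :=
  if_pos hh

lemma switchPolicy_of_le {n h : ℕ} (hh : n ≤ h) : switchPolicy π π' n h = π' h :=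
  if_neg (Nat.not_lt.2 hh)

lemma IsPolicy.switchPolicy [Fintype A] (hπ : IsPolicy π) (hπ' : IsPolicy π') (n : ℕ) :
    IsPolicy (switchPolicy π π' n) := fun h => by
  rcases lt_or_ge h n with hh | hh
  · rw [switchPolicy_of_lt hh]; exact hπ h
  · rw [switchPolicy_of_le hh]; exact hπ' h

end SwitchPolicy

section Occupancy

variable {S A : Type*} [Fintype S] [Fintype A] {ρ : S → ℝ} {P : ℕ → S → A → S → ℝ}
  {π π' : ℕ → S → A → ℝ} {Q : ℕ → S → A → ℝ} {H h : ℕ}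

lemma stateDist_succ (h : ℕ) (s' : S) :
    stateDist ρ P π (h + 1) s' = ∑ s : S, ∑ a : A, saDist ρ P π h s a * P h s a s' :=
  rfl

lemma stateDist_nonneg (hρ : IsInitDist ρ) (hP : IsTransition P) (hπ : IsPolicy π) :
    ∀ h s, 0 ≤ stateDist ρ P π h s
  | 0, s => hρ.1 s
  | h + 1, s' => Finset.sum_nonneg fun s _ => Finset.sum_nonneg fun a _ =>
      mul_nonneg (mul_nonneg (stateDist_nonneg hρ hP hπ h s) ((hπ h s).1 a)) ((hP h s a).1 s')

lemma saDist_nonneg (hρ : IsInitDist ρ) (hP : IsTransition P) (hπ : IsPolicy π)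
    (h : ℕ) (s : S) (a : A) : 0 ≤ saDist ρ P π h s a :=
  mul_nonneg (stateDist_nonneg hρ hP hπ h s) ((hπ h s).1 a)

lemma sum_saDist_eq_sum_stateDist (hπ : IsPolicy π) (h : ℕ) :
    ∑ s : S, ∑ a : A, saDist ρ P π h s a = ∑ s : S, stateDist ρ P π h s :=
  Finset.sum_congr rfl fun s _ => by
    simp only [saDist]
    rw [← Finset.mul_sum, (hπ h s).2, mul_one]

lemma sum_stateDist_succ (hP : IsTransition P) (h : ℕ) :
    ∑ s : S, stateDist ρ P π (h + 1) s = ∑ s : S, ∑ a : A, saDist ρ P π h s a := by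
  simp only [stateDist_succ]
  rw [Finset.sum_comm]
  refine Finset.sum_congr rfl fun s _ => ?_
  rw [Finset.sum_comm]
  exact Finset.sum_congr rfl fun a _ => by rw [← Finset.mul_sum, (hP h s a).2, mul_one]

lemma sum_stateDist_eq_one (hρ : IsInitDist ρ) (hP : IsTransition P) (hπ : IsPolicy π) :
    ∀ h, ∑ s : S, stateDist ρ P π h s = 1
  | 0 => hρ.2
  | h + 1 => by
    rw [sum_stateDist_succ hP, sum_saDist_eq_sum_stateDist hπ, sum_stateDist_eq_one hρ hP hπ h]

lemma sum_saDist_eq_one (hρ : IsInitDist ρ) (hP : IsTransition P) (hπ : IsPolicy π) (h : ℕ) :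
    ∑ s : S, ∑ a : A, saDist ρ P π h s a = 1 := by
  rw [sum_saDist_eq_sum_stateDist hπ, sum_stateDist_eq_one hρ hP hπ]

lemma stateDist_eq_of_forall_lt_eq {n : ℕ} (hππ' : ∀ k < n, π k = π' k) :
    stateDist ρ P π n = stateDist ρ P π' n := by
  induction n with
  | zero => rfl
  | succ n ih =>
    funext s'
    simp only [stateDist_succ, saDist, ih fun k hk => hππ' k (Nat.lt_succ_of_lt hk),
      hππ' n n.lt_succ_self]

noncomputable def stepLoss (ρ : S → ℝ) (P : ℕ → S → A → S → ℝ) (π : ℕ → S → A → ℝ)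
    (Q : ℕ → S → A → ℝ) (h : ℕ) : ℝ :=
  ∑ s : S, ∑ a : A, |saDist ρ P π h s a - Q h s a|

lemma vailLoss_eq_sum_stepLoss :
    vailLoss ρ P π Q H = ∑ h ∈ Finset.range H, stepLoss ρ P π Q h :=
  rfl

lemma stepLoss_eq_sum_prod :
    stepLoss ρ P π Q h = ∑ p : S × A, |saDist ρ P π h p.1 p.2 - Q h p.1 p.2| :=
  (Fintype.sum_prod_type' _).symm

lemma stateDist_switchPolicy {n h : ℕ} (hh : h ≤ n) :
    stateDist ρ P (switchPolicy π π' n) h = stateDist ρ P π h :=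
  stateDist_eq_of_forall_lt_eq fun _ hk => switchPolicy_of_lt (hk.trans_le hh)

lemma saDist_switchPolicy {n h : ℕ} (hh : h < n) :
    saDist ρ P (switchPolicy π π' n) h = saDist ρ P π h := by
  funext s a
  rw [saDist, saDist, stateDist_switchPolicy hh.le, switchPolicy_of_lt hh]

end Occupancy

section ResetCliff

variable {S A : Type*} [Fintype S] [Fintype A] {ρ : S → ℝ}
  {P : ℕ → S → A → S → ℝ} {π : ℕ → S → A → ℝ} {G : Finset S} {a1 : A}

def EnteredOnlyVia (P : ℕ → S → A → S → ℝ) (G : Finset S) (a1 : A) : Prop :=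
  ∀ h s a, ∀ s' ∈ G, (s ∉ G ∨ a ≠ a1) → P h s a s' = 0

lemma ResetCliff.enteredOnlyVia [DecidableEq S] {r : ℕ → S → A → ℝ}
    (hRC : ResetCliff ρ P r G a1) (hP : IsTransition P) : EnteredOnlyVia P G a1 := by
  intro h s a s' hs' hsa
  have hleave : ∑ t ∈ Gᶜ, P h s a t = 1 := by
    by_cases hs : s ∈ G
    · exact hRC.2.2.2.2.2.1 h s hs a (hsa.resolve_left (not_not.2 hs))
    · exact hRC.2.2.2.2.2.2.1 h s hs a
  have hstay : ∑ t ∈ G, P h s a t = 0 := by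
    linarith [Finset.sum_add_sum_compl G (P h s a), (hP h s a).2]
  exact (Finset.sum_eq_zero_iff_of_nonneg fun t _ => (hP h s a).1 t).1 hstay s' hs'

lemma stateDist_succ_of_mem (hentry : EnteredOnlyVia P G a1)
    {h : ℕ} {s' : S} (hs' : s' ∈ G) :
    stateDist ρ P π (h + 1) s' = ∑ s ∈ G, saDist ρ P π h s a1 * P h s a1 s' := by
  rw [stateDist_succ, ← Finset.sum_subset G.subset_univ fun s _ hs =>
    Finset.sum_eq_zero fun a _ => by rw [hentry h s a s' hs' (Or.inl hs), mul_zero]]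
  refine Finset.sum_congr rfl fun s _ => Finset.sum_eq_single a1 (fun a _ ha => ?_)
    (absurd (Finset.mem_univ a1))
  rw [hentry h s a s' hs' (Or.inr ha), mul_zero]

def OffTrack (ρ : S → ℝ) (P : ℕ → S → A → S → ℝ) (π : ℕ → S → A → ℝ) (G : Finset S) (a1 : A)
    (h : ℕ) : Prop :=
  ∀ s ∈ G, saDist ρ P π h s a1 = 0

lemma OffTrack.succ (hentry : EnteredOnlyVia P G a1) {h : ℕ}
    (hoff : OffTrack ρ P π G a1 h) : OffTrack ρ P π G a1 (h + 1) := fun s hs => by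
  rw [saDist, stateDist_succ_of_mem hentry hs,
    Finset.sum_eq_zero fun t ht => by rw [hoff t ht, zero_mul], zero_mul]

lemma OffTrack.mono (hentry : EnteredOnlyVia P G a1)
    {h k : ℕ} (hoff : OffTrack ρ P π G a1 h) (hhk : h ≤ k) : OffTrack ρ P π G a1 k :=
  Nat.le_induction hoff (fun _ _ ih => ih.succ hentry) k hhk

lemma stateDist_succ_pos_of_not_offTrack (hρ : IsInitDist ρ) (hP : IsTransition P)
    (hπ : IsPolicy π) (hentry : EnteredOnlyVia P G a1)
    {h : ℕ} (hpos : ∀ s ∈ G, ∀ s' ∈ G, 0 < P h s a1 s') (hon : ¬ OffTrack ρ P π G a1 h)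
    {s' : S} (hs' : s' ∈ G) : 0 < stateDist ρ P π (h + 1) s' := by
  obtain ⟨s, hs, hne⟩ : ∃ s ∈ G, saDist ρ P π h s a1 ≠ 0 := by
    simpa [OffTrack] using hon
  rw [stateDist_succ_of_mem hentry hs']
  exact Finset.sum_pos'
    (fun t _ => mul_nonneg (saDist_nonneg hρ hP hπ h t a1) ((hP h t a1).1 s'))
    ⟨s, hs, mul_pos ((saDist_nonneg hρ hP hπ h s a1).lt_of_ne' hne) (hpos s hs s' hs')⟩

lemma stateDist_pos_of_forall_lt_not_offTrack (hρ : IsInitDist ρ) (hP : IsTransition P)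
    (hπ : IsPolicy π) (hentry : EnteredOnlyVia P G a1)
    (hpos : ∀ h, ∀ s ∈ G, ∀ s' ∈ G, 0 < P h s a1 s') (hρG : ∀ s ∈ G, 0 < ρ s) {n : ℕ}
    (hon : ∀ k < n, ¬ OffTrack ρ P π G a1 k) {s : S} (hs : s ∈ G) :
    0 < stateDist ρ P π n s := by
  cases n with
  | zero => exact hρG s hs
  | succ k =>
    exact stateDist_succ_pos_of_not_offTrack hρ hP hπ hentry (hpos k) (hon k k.lt_succ_self) hs

end ResetCliff

section Admissible

variable {S A : Type*} [Fintype S] [DecidableEq S] {G : Finset S} {a1 : A}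
  {Q : ℕ → S → A → ℝ} {H h : ℕ}

lemma AdmissibleEst.sum_eq_one [Fintype A] (hQ : AdmissibleEst G a1 Q H) (hh : h < H) :
    ∑ s : S, ∑ a : A, Q h s a = 1 := by
  obtain ⟨-, hzero, hone⟩ := hQ h hh
  rw [← hone, ← Finset.sum_subset G.subset_univ fun s _ hs =>
    Finset.sum_eq_zero fun a _ => hzero s a (Or.inl hs)]
  exact Finset.sum_congr rfl fun s _ => Finset.sum_eq_single a1
    (fun a _ ha => hzero s a (Or.inr ha)) (absurd (Finset.mem_univ a1))

lemma AdmissibleEst.exists_pos (hQ : AdmissibleEst G a1 Q H) (hh : h < H) :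
    ∃ s ∈ G, 0 < Q h s a1 :=
  Finset.exists_lt_of_sum_lt (by simp [(hQ h hh).2.2])

end Admissible

section Loss

variable {S A : Type*} [Fintype S] [Fintype A] [DecidableEq S] {ρ : S → ℝ}
  {P : ℕ → S → A → S → ℝ} {π π' : ℕ → S → A → ℝ} {G : Finset S} {a1 : A}
  {Q : ℕ → S → A → ℝ} {H h : ℕ}

lemma two_eq_sum_saDist_add_sum (hρ : IsInitDist ρ) (hP : IsTransition P) (hπ : IsPolicy π)
    (hQ : AdmissibleEst G a1 Q H) (hh : h < H) :
    (2 : ℝ) = ∑ p : S × A, saDist ρ P π h p.1 p.2 + ∑ p : S × A, Q h p.1 p.2 := by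
  rw [Fintype.sum_prod_type', Fintype.sum_prod_type', sum_saDist_eq_one hρ hP hπ,
    hQ.sum_eq_one hh, one_add_one_eq_two]

lemma stepLoss_le_two (hρ : IsInitDist ρ) (hP : IsTransition P) (hπ : IsPolicy π)
    (hQ : AdmissibleEst G a1 Q H) (hh : h < H) : stepLoss ρ P π Q h ≤ 2 := by
  rw [stepLoss_eq_sum_prod, two_eq_sum_saDist_add_sum hρ hP hπ hQ hh]
  exact sum_abs_sub_le_sum_add_sum (fun p => saDist_nonneg hρ hP hπ h p.1 p.2)
    fun p => (hQ h hh).1 p.1 p.2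

lemma stepLoss_eq_two_of_offTrack (hρ : IsInitDist ρ) (hP : IsTransition P) (hπ : IsPolicy π)
    (hQ : AdmissibleEst G a1 Q H) (hh : h < H) (hoff : OffTrack ρ P π G a1 h) :
    stepLoss ρ P π Q h = 2 := by
  rw [stepLoss_eq_sum_prod, two_eq_sum_saDist_add_sum hρ hP hπ hQ hh]
  refine sum_abs_sub_eq_sum_add_sum (fun p => saDist_nonneg hρ hP hπ h p.1 p.2)
    (fun p => (hQ h hh).1 p.1 p.2) fun ⟨s, a⟩ => ?_
  by_cases hsa : s ∈ G ∧ a = a1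
  · exact Or.inl (hsa.2 ▸ hoff s hsa.1)
  · exact Or.inr ((hQ h hh).2.1 s a (not_and_or.1 hsa))

lemma stepLoss_lt_two (hρ : IsInitDist ρ) (hP : IsTransition P) (hπ : IsPolicy π)
    (hQ : AdmissibleEst G a1 Q H) (hh : h < H) {s : S} {a : A}
    (hπsa : 0 < saDist ρ P π h s a) (hQsa : 0 < Q h s a) : stepLoss ρ P π Q h < 2 := by
  rw [stepLoss_eq_sum_prod, two_eq_sum_saDist_add_sum hρ hP hπ hQ hh]
  exact sum_abs_sub_lt_sum_add_sum (fun p => saDist_nonneg hρ hP hπ h p.1 p.2)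
    (fun p => (hQ h hh).1 p.1 p.2) (s, a) hπsa hQsa

lemma vailLoss_switchPolicy_lt (hρ : IsInitDist ρ) (hP : IsTransition P) (hπ : IsPolicy π)
    (hπ' : IsPolicy π') (hentry : EnteredOnlyVia P G a1)
    (hQ : AdmissibleEst G a1 Q H) {n : ℕ} (hn : n < H) (hπ'a1 : ∀ s, π' n s a1 = 1)
    (hoff : OffTrack ρ P π G a1 n) (hpos : ∀ s ∈ G, 0 < stateDist ρ P π n s) :
    vailLoss ρ P (switchPolicy π π' n) Q H < vailLoss ρ P π Q H := by
  have hσ := hπ.switchPolicy hπ' n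
  obtain ⟨s, hs, hQs⟩ := hQ.exists_pos hn
  rw [vailLoss_eq_sum_stepLoss, vailLoss_eq_sum_stepLoss]
  refine Finset.sum_lt_sum (fun k hk => ?_) ⟨n, Finset.mem_range.2 hn, ?_⟩
  · have hkH := Finset.mem_range.1 hk
    rcases lt_or_ge k n with hkn | hnk
    · rw [stepLoss, stepLoss, saDist_switchPolicy hkn]
    · rw [stepLoss_eq_two_of_offTrack hρ hP hπ hQ hkH (hoff.mono hentry hnk)]
      exact stepLoss_le_two hρ hP hσ hQ hkH
  · rw [stepLoss_eq_two_of_offTrack hρ hP hπ hQ hn hoff]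
    refine stepLoss_lt_two hρ hP hσ hQ hn (s := s) (a := a1) ?_ hQs
    rw [saDist, stateDist_switchPolicy le_rfl, switchPolicy_of_le le_rfl, hπ'a1, mul_one]
    exact hpos s hs

end Loss

theorem vail_minimizer_positive_on_good_general {S A : Type*} [Fintype S] [Fintype A]
    [DecidableEq S]
    (ρ : S → ℝ) (P : ℕ → S → A → S → ℝ) (r : ℕ → S → A → ℝ)
    (πE πAIL : ℕ → S → A → ℝ) (G : Finset S) (a1 : A)
    (Q : ℕ → S → A → ℝ) (H : ℕ)
    (hρ : IsInitDist ρ) (hP : IsTransition P)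
    (hE : IsPolicy πE) (hAILpol : IsPolicy πAIL)
    (hRC : ResetCliff ρ P r G a1)
    (hEa : ∀ h s, πE h s a1 = 1)
    (hQ : AdmissibleEst G a1 Q H)
    (hmin : ∀ π, IsPolicy π → vailLoss ρ P πAIL Q H ≤ vailLoss ρ P π Q H) :
    ∀ h < H, ∃ s ∈ G, 0 < πAIL h s a1 := by
  classical
  have hentry := hRC.enteredOnlyVia hP
  obtain ⟨-, -, -, -, hPpos, -, -, hρG, -⟩ := hRC
  intro h hh
  by_contra! hzero
  have hoff : OffTrack ρ P πAIL G a1 h := fun s hs => by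
    rw [saDist, le_antisymm (hzero s hs) ((hAILpol h s).1 a1), mul_zero]
  have hex : ∃ n, OffTrack ρ P πAIL G a1 n := ⟨h, hoff⟩
  have hfirst : Nat.find hex < H := (Nat.find_min' hex hoff).trans_lt hh
  have hpos : ∀ s ∈ G, 0 < stateDist ρ P πAIL (Nat.find hex) s := fun _ hs =>
    stateDist_pos_of_forall_lt_not_offTrack hρ hP hAILpol hentry hPpos hρG
      (fun _ hk => Nat.find_min hex hk) hs
  exact (hmin _ (hAILpol.switchPolicy hE _)).not_gt <| vailLoss_switchPolicy_lt hρ hP hAILpol hE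
    hentry hQ hfirst (hEa _) (Nat.find_spec hex) hpos

/-- on any Reset Cliff instance with admissible estimates, any global minimizer
`πAIL` of the VAIL objective plays the expert action `a1` with positive probability on some
good state at every time step. -/
theorem vail_minimizer_positive_on_good {S A : Type*} [Fintype S] [Fintype A]
    [Nonempty S] [Nonempty A] [DecidableEq S]
    (ρ : S → ℝ) (P : ℕ → S → A → S → ℝ) (r : ℕ → S → A → ℝ)
    (πE πAIL : ℕ → S → A → ℝ) (G : Finset S) (a1 : A)
    (Q : ℕ → S → A → ℝ) (H : ℕ) (hH : 1 ≤ H)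
    (hρ : IsInitDist ρ) (hP : IsTransition P) (hr : IsReward r)
    (hE : IsPolicy πE) (hAILpol : IsPolicy πAIL)
    (hRC : ResetCliff ρ P r G a1)
    (hEa : ∀ h s, πE h s a1 = 1)
    (hQ : AdmissibleEst G a1 Q H)
    (hmin : ∀ π, IsPolicy π → vailLoss ρ P πAIL Q H ≤ vailLoss ρ P π Q H) :
    ∀ h < H, ∃ s ∈ G, 0 < πAIL h s a1 :=
  vail_minimizer_positive_on_good_general ρ P r πE πAIL G a1 Q H hρ hP hE hAILpol hRC hEa hQ hmin
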